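/- arXiv:2102.02243 — 4 statements merged into one kernel-verified Lean document; each statement's English description precedes it below -/
import Mathlib

section
/- (Generalized Leftover Hash Lemma.) Let A and B be jointly distributed random variables on finite sets, let {h_s : 𝒳 → {0,1}^ℓ}_{s∈𝒮} be a strong universal hash family, let S be uniformly distributed on 𝒮 and independent of (A, B), and let U_ℓ be uniformly distributed on {0,1}^ℓ independent of (A, B, S). Then SD((B, S, h_S(A)); (B, S, U_ℓ)) ≤ (1/2)·√(2^{ℓ − H̃∞(A|B)}). -/
open scoped BigOperators Classical

/-- Statistical distance `SD(p;q) = max_{W ⊆ T} (Pr_p[W] − Pr_q[W])`. -/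
noncomputable def SD {T : Type*} [Fintype T] (p q : T → ℝ) : ℝ :=
  Finset.univ.sup' Finset.univ_nonempty (fun W : Finset T => ∑ t ∈ W, p t - ∑ t ∈ W, q t)

/-- Average conditional min-entropy `H̃∞(A|B) = -log₂ Σ_b max_a Pr[A = a, B = b]`. -/
noncomputable def Havg {A B : Type*} [Fintype A] [Fintype B] [Nonempty A] (p : A × B → ℝ) : ℝ :=
  - Real.logb 2 (∑ b : B, Finset.univ.sup' Finset.univ_nonempty (fun a : A => p (a, b)))

/-- A strong universal hash family: for `x ≠ x'` and all `a b`,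
`Pr_{s ← Uniform(𝒮)}[h_s x = a ∧ h_s x' = b] = 1/|𝒴|²`. -/
def StrongUHF {S X Y : Type*} [Fintype S] [Fintype Y] (h : S → X → Y) : Prop :=
  ∀ x x' : X, x ≠ x' → ∀ a b : Y,
    ((Finset.univ.filter (fun s : S => h s x = a ∧ h s x' = b)).card : ℝ) / Fintype.card S
      = 1 / (Fintype.card Y : ℝ) ^ 2

/-!
Fix a value `b` of `B` and write `g a = Pr[A = a, B = b]`. Strong universality makes
`Pr_s[h_s a = h_s a'] = 1/|Y|` for `a ≠ a'`, so the squared ℓ² distance between the `g`-weighted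
laws of `(S, h_S(A))` and of `(S, U)` is exactly `(1 - 1/|Y|) Σ_a g(a)² / |S|`.
Cauchy–Schwarz over the `|S| |Y|` points turns this into the ℓ¹ bound `√(|Y| Σ_a g(a)²)`, and
`Σ_a g(a)² ≤ max_a g(a) · Pr[B = b]`. A second Cauchy–Schwarz, over `b`, bounds the total ℓ¹
distance by `√(|Y| Σ_b max_a p(a, b)) = √(2^(ℓ - H̃∞(A|B)))`, and the statistical distance of two
distributions is half their ℓ¹ distance.
-/

open Finset

theorem SD_le_half_sum_abs_sub {T : Type*} [Fintype T] {p q : T → ℝ}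
    (hpq : ∑ t, p t = ∑ t, q t) : SD p q ≤ 1 / 2 * ∑ t, |p t - q t| := by
  refine sup'_le _ _ fun W _ => ?_
  -- `(|x| + x) / 2` is the positive part of `x`, and the positive parts sum to half the total.
  calc ∑ t ∈ W, p t - ∑ t ∈ W, q t = ∑ t ∈ W, (p t - q t) := (sum_sub_distrib ..).symm
    _ ≤ ∑ t ∈ W, (|p t - q t| + (p t - q t)) / 2 :=
        sum_le_sum fun t _ => by linarith [le_abs_self (p t - q t)]
    _ ≤ ∑ t, (|p t - q t| + (p t - q t)) / 2 :=
        sum_le_sum_of_subset_of_nonneg (subset_univ W) fun t _ _ => by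
          linarith [neg_abs_le (p t - q t)]
    _ = 1 / 2 * ∑ t, |p t - q t| := by
        rw [← sum_div, sum_add_distrib, sum_sub_distrib, hpq, sub_self, add_zero]
        ring

theorem sum_sq_sum_fiber {X Y : Type*} [Fintype X] [Fintype Y] [DecidableEq Y]
    (f : X → Y) (g : X → ℝ) :
    ∑ y, (∑ a ∈ univ with f a = y, g a) ^ 2 = ∑ a, g a * ∑ a' ∈ univ with f a' = f a, g a' := by
  calc ∑ y, (∑ a ∈ univ with f a = y, g a) ^ 2
      = ∑ y, ∑ a ∈ univ with f a = y, g a * ∑ a' ∈ univ with f a' = f a, g a' := by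
        refine sum_congr rfl fun y _ => ?_
        rw [sq, sum_mul]
        refine sum_congr rfl fun a ha => ?_
        rw [(mem_filter.1 ha).2]
    _ = _ := sum_fiberwise _ _ _

theorem sum_sq_le_sup'_mul_sum {X : Type*} [Fintype X] [Nonempty X] {g : X → ℝ}
    (hg : ∀ a, 0 ≤ g a) : ∑ a, g a ^ 2 ≤ univ.sup' univ_nonempty g * ∑ a, g a := by
  rw [mul_sum]
  exact sum_le_sum fun a _ => by
    rw [sq]
    exact mul_le_mul_of_nonneg_right (le_sup' g (mem_univ a)) (hg a)

theorem two_rpow_neg_Havg {A B : Type*} [Fintype A] [Fintype B] [Nonempty A] {p : A × B → ℝ}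
    (hpos : 0 < ∑ x, p x) :
    (2 : ℝ) ^ (-Havg p) = ∑ b, univ.sup' univ_nonempty fun a => p (a, b) := by
  have hle : ∑ x, p x ≤ Fintype.card A * ∑ b, univ.sup' univ_nonempty fun a => p (a, b) := by
    rw [Fintype.sum_prod_type_right, mul_sum]
    refine sum_le_sum fun b _ => ?_
    calc ∑ a, p (a, b) ≤ ∑ _a : A, univ.sup' univ_nonempty fun a => p (a, b) :=
          sum_le_sum fun a _ => le_sup' (fun a => p (a, b)) (mem_univ a)
      _ = _ := by rw [sum_const, card_univ, nsmul_eq_mul]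
  have hK : 0 < ∑ b, univ.sup' univ_nonempty fun a => p (a, b) :=
    pos_of_mul_pos_right (hpos.trans_le hle) (Nat.cast_nonneg _)
  rw [Havg, neg_neg, Real.rpow_logb two_pos (by norm_num) hK]

section StrongUHF

variable {X S Y : Type*} [Fintype S] [Fintype Y] [DecidableEq Y] [Nonempty S] {h : S → X → Y}

theorem StrongUHF.card_collision [Nonempty Y] (hUHF : StrongUHF h) {a a' : X} (hne : a ≠ a') :
    (#{s | h s a = h s a'} : ℝ) = Fintype.card S / Fintype.card Y := by
  have hpair (y : Y) :
      (#{s | h s a = y ∧ h s a' = y} : ℝ) = Fintype.card S / Fintype.card Y ^ 2 := by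
    have hy := hUHF a a' hne y y
    rw [div_eq_iff (by positivity)] at hy
    rw [div_eq_mul_one_div, mul_comm, ← hy]
    -- `StrongUHF` filters with the classical decidability instance, we use `DecidableEq Y`.
    congr 3
  rw [card_eq_sum_card_fiberwise (f := fun s => h s a) (t := univ) fun _ _ => mem_univ _]
  push_cast
  calc ∑ y, (#{s ∈ {s | h s a = h s a'} | h s a = y} : ℝ)
      = ∑ y, (#{s | h s a = y ∧ h s a' = y} : ℝ) := by
        refine sum_congr rfl fun y _ => ?_
        rw [filter_filter]
        congr 2
        exact filter_congr fun s _ =>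
          ⟨fun ⟨he, hy⟩ => ⟨hy, he.symm.trans hy⟩, fun ⟨hy, hy'⟩ => ⟨hy.trans hy'.symm, hy⟩⟩
    _ = Fintype.card S / Fintype.card Y := by
        simp only [hpair, sum_const, card_univ, nsmul_eq_mul]
        field_simp

variable [Fintype X]

theorem sum_sum_fiber_div_card (h : S → X → Y) (g : X → ℝ) :
    ∑ w : S × Y, (∑ a ∈ univ with h w.1 a = w.2, g a) / Fintype.card S = ∑ a, g a := by
  rw [← sum_div, Fintype.sum_prod_type]
  simp only [sum_fiberwise, sum_const, card_univ, nsmul_eq_mul]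
  field_simp

theorem StrongUHF.sum_sum_sq_sum_fiber [Nonempty Y] (hUHF : StrongUHF h) (g : X → ℝ) :
    ∑ s, ∑ y, (∑ a ∈ univ with h s a = y, g a) ^ 2
      = Fintype.card S / Fintype.card Y * (∑ a, g a) ^ 2
        + Fintype.card S * (1 - 1 / Fintype.card Y) * ∑ a, g a ^ 2 := by
  set c : ℝ := Fintype.card S / Fintype.card Y
  set d : ℝ := Fintype.card S * (1 - 1 / Fintype.card Y)
  have hcollision (a a' : X) : (#{s | h s a' = h s a} : ℝ) = c + if a' = a then d else 0 := by
    by_cases ha : a' = a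
    · simp only [ha, filter_true, card_univ, ↓reduceIte, c, d]
      ring
    · rw [hUHF.card_collision ha, if_neg ha, add_zero]
  calc ∑ s, ∑ y, (∑ a ∈ univ with h s a = y, g a) ^ 2
      = ∑ a, g a * ∑ a', g a' * #{s | h s a' = h s a} := by
        simp only [sum_sq_sum_fiber]
        simp only [sum_filter]
        rw [sum_comm]
        refine sum_congr rfl fun a _ => ?_
        rw [← mul_sum, sum_comm]
        simp only [← sum_filter, sum_const, nsmul_eq_mul, mul_comm]
    _ = c * (∑ a, g a) ^ 2 + d * ∑ a, g a ^ 2 := by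
        simp only [hcollision, mul_add, sum_add_distrib, mul_ite, mul_zero, sum_ite_eq', mem_univ,
          if_true]
        simp only [← sum_mul, ← mul_assoc, ← sq]
        ring

theorem StrongUHF.sum_sq_sub_uniform [Nonempty Y] (hUHF : StrongUHF h) (g : X → ℝ) :
    ∑ w : S × Y, ((∑ a ∈ univ with h w.1 a = w.2, g a) / Fintype.card S
        - (∑ a, g a) / (Fintype.card S * Fintype.card Y)) ^ 2
      = (1 - 1 / Fintype.card Y) * (∑ a, g a ^ 2) / Fintype.card S := by
  have hS : (Fintype.card S : ℝ) ≠ 0 := by positivity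
  have hY : (Fintype.card Y : ℝ) ≠ 0 := by positivity
  simp only [sub_sq, sum_add_distrib, sum_sub_distrib, ← sum_mul, ← mul_sum, sum_const, card_univ,
    Fintype.card_prod, nsmul_eq_mul, div_pow, ← sum_div, Fintype.sum_prod_type, sum_fiberwise,
    hUHF.sum_sum_sq_sum_fiber]
  push_cast
  field_simp
  ring

theorem StrongUHF.sum_abs_sub_uniform_le [Nonempty Y] (hUHF : StrongUHF h) (g : X → ℝ) :
    ∑ w : S × Y, |(∑ a ∈ univ with h w.1 a = w.2, g a) / Fintype.card S
        - (∑ a, g a) / (Fintype.card S * Fintype.card Y)|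
      ≤ √(Fintype.card Y * ∑ a, g a ^ 2) := by
  refine Real.le_sqrt_of_sq_le ((sq_sum_le_card_mul_sum_sq ..).trans ?_)
  simp only [sq_abs, hUHF.sum_sq_sub_uniform, card_univ, Fintype.card_prod]
  have hS : (0 : ℝ) < Fintype.card S := by positivity
  have hY : (0 : ℝ) < Fintype.card Y := by positivity
  have hq : 0 ≤ ∑ a, g a ^ 2 := by positivity
  push_cast
  field_simp
  nlinarith

theorem StrongUHF.SD_le [Nonempty X] [Nonempty Y] {B : Type*} [Fintype B]
    (hUHF : StrongUHF h) (p : X × B → ℝ) (hp : ∀ x, 0 ≤ p x) (hsum : ∑ x, p x = 1) :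
    SD (fun w : B × S × Y =>
          (∑ a ∈ univ with h w.2.1 a = w.2.2, p (a, w.1)) / Fintype.card S)
        (fun w : B × S × Y => (∑ a, p (a, w.1)) / (Fintype.card S * Fintype.card Y))
      ≤ 1 / 2 * √(Fintype.card Y * ∑ b, univ.sup' univ_nonempty fun a => p (a, b)) := by
  set m : B → ℝ := fun b => univ.sup' univ_nonempty fun a => p (a, b)
  set t : B → ℝ := fun b => ∑ a, p (a, b)
  have hm (b : B) : 0 ≤ m b :=
    (hp _).trans (le_sup' (fun a => p (a, b)) (mem_univ (Classical.arbitrary X)))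
  have ht (b : B) : 0 ≤ t b := sum_nonneg fun a _ => hp _
  have ht_sum : ∑ b, t b = 1 := by rw [← hsum, Fintype.sum_prod_type_right]
  have hmarginal (b : B) : ∑ v : S × Y, |(∑ a ∈ univ with h v.1 a = v.2, p (a, b)) / Fintype.card S
        - t b / (Fintype.card S * Fintype.card Y)| ≤ √(Fintype.card Y) * (√(m b) * √(t b)) := by
    rw [← Real.sqrt_mul (hm b), ← Real.sqrt_mul (by positivity)]
    exact (hUHF.sum_abs_sub_uniform_le _).trans
      (Real.sqrt_le_sqrt (by gcongr; exact sum_sq_le_sup'_mul_sum fun a => hp _))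
  refine (SD_le_half_sum_abs_sub ?_).trans ?_
  · rw [Fintype.sum_prod_type, Fintype.sum_prod_type]
    refine sum_congr rfl fun b _ => ?_
    dsimp only
    rw [sum_sum_fiber_div_card, sum_const, card_univ, Fintype.card_prod, nsmul_eq_mul]
    push_cast
    field_simp
  calc 1 / 2 * ∑ w : B × S × Y, |(∑ a ∈ univ with h w.2.1 a = w.2.2, p (a, w.1)) / Fintype.card S
        - t w.1 / (Fintype.card S * Fintype.card Y)|
      ≤ 1 / 2 * ∑ b, √(Fintype.card Y) * (√(m b) * √(t b)) := by
        rw [Fintype.sum_prod_type]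
        gcongr with b
        exact hmarginal b
    _ ≤ 1 / 2 * (√(Fintype.card Y) * (√(∑ b, m b) * √(∑ b, t b))) := by
        rw [← mul_sum]
        gcongr
        exact Real.sum_sqrt_mul_sqrt_le _ hm ht
    _ = 1 / 2 * √(Fintype.card Y * ∑ b, m b) := by
        rw [ht_sum, Real.sqrt_one, mul_one, Real.sqrt_mul (by positivity)]

end StrongUHF

/-- Generalized Leftover Hash Lemma: for a strong universal hash family
`{h_s : 𝒳 → {0,1}^ℓ}` with uniform independent seed `S`,
`SD((B, S, h_S(A)); (B, S, U_ℓ)) ≤ (1/2)·√(2^{ℓ − H̃∞(A|B)})`. -/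
theorem generalized_leftover_hash_lemma
    {X B S : Type*} [Fintype X] [Fintype B] [Fintype S] [Nonempty X] [Nonempty S]
    (ℓ : ℕ) (h : S → X → (Fin ℓ → Bool)) (hUHF : StrongUHF h)
    (p : X × B → ℝ) (hp : ∀ x, 0 ≤ p x) (hsum : ∑ x : X × B, p x = 1) :
    SD
      -- distribution of (B, S, h_S(A))
      (fun w : B × S × (Fin ℓ → Bool) =>
        (∑ a ∈ Finset.univ.filter (fun a : X => h w.2.1 a = w.2.2), p (a, w.1))
          / (Fintype.card S : ℝ))
      -- distribution of (B, S, U_ℓ)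
      (fun w : B × S × (Fin ℓ → Bool) =>
        (∑ a : X, p (a, w.1)) / ((Fintype.card S : ℝ) * 2 ^ ℓ))
      ≤ (1 / 2) * Real.sqrt ((2 : ℝ) ^ ((ℓ : ℝ) - Havg p)) := by
  have hcard : (Fintype.card (Fin ℓ → Bool) : ℝ) = 2 ^ ℓ := by simp
  rw [sub_eq_add_neg, Real.rpow_add two_pos, Real.rpow_natCast,
    two_rpow_neg_Havg (hsum ▸ one_pos), ← hcard]
  exact hUHF.SD_le p hp hsum
end

section
/- (Composability of iKEM.) Let (Z, C, K_A, K_B) be jointly distributed random variables on finite sets, where K_A and K_B take values in {0,1}^ℓ, and let U be uniformly distributed on {0,1}^ℓ independent of (Z, C). Suppose (i) Pr[K_A ≠ K_B] ≤ ε (ε-correctness) and (ii) SD((Z, C, K_A); (Z, C, U)) ≤ σ (σ-one-time security). Then SD((Z, C, K_A, K_B); (Z, C, U, U)) ≤ ε + σ, where in the second distribution the same uniform string U appears in both key positions. -/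
open scoped BigOperators Classical

/-- Composability of iKEM: if `(Z, C, K_A, K_B)` is jointly distributed with
keys in `{0,1}^ℓ`, the iKEM is ε-correct (`Pr[K_A ≠ K_B] ≤ ε`) and σ-one-time secure
(`SD((Z, C, K_A); (Z, C, U)) ≤ σ` for `U` uniform on `{0,1}^ℓ` independent of `(Z,C)`),
then `SD((Z, C, K_A, K_B); (Z, C, U, U)) ≤ ε + σ`, where the same uniform string `U` appears
in both key positions of the ideal world. -/
theorem ikem_composability
    {Z C : Type*} [Fintype Z] [Fintype C] (ℓ : ℕ)
    (p : Z × C × (Fin ℓ → Bool) × (Fin ℓ → Bool) → ℝ)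
    (hp : ∀ x, 0 ≤ p x) (hsum : ∑ x, p x = 1)
    (ε σ : ℝ)
    -- (i) ε-correctness
    (hcorrect : (∑ x ∈ Finset.univ.filter
        (fun x : Z × C × (Fin ℓ → Bool) × (Fin ℓ → Bool) => x.2.2.1 ≠ x.2.2.2), p x) ≤ ε)
    -- (ii) σ-one-time security
    (hsec : SD
        (fun w : Z × C × (Fin ℓ → Bool) => ∑ kb : Fin ℓ → Bool, p (w.1, w.2.1, w.2.2, kb))
        (fun w : Z × C × (Fin ℓ → Bool) =>
          (∑ ka : Fin ℓ → Bool, ∑ kb : Fin ℓ → Bool, p (w.1, w.2.1, ka, kb)) / 2 ^ ℓ)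
      ≤ σ) :
    SD p
        (fun x : Z × C × (Fin ℓ → Bool) × (Fin ℓ → Bool) =>
          if x.2.2.2 = x.2.2.1 then
            (∑ ka : Fin ℓ → Bool, ∑ kb : Fin ℓ → Bool, p (x.1, x.2.1, ka, kb)) / 2 ^ ℓ
          else 0)
      ≤ ε + σ := by
  classical
  set q : Z × C × (Fin ℓ → Bool) × (Fin ℓ → Bool) → ℝ :=
    fun x => if x.2.2.2 = x.2.2.1 then
        (∑ ka : Fin ℓ → Bool, ∑ kb : Fin ℓ → Bool, p (x.1, x.2.1, ka, kb)) / 2 ^ ℓ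
      else 0 with hqdef
  set p' : Z × C × (Fin ℓ → Bool) × (Fin ℓ → Bool) → ℝ :=
    fun x => if x.2.2.2 = x.2.2.1 then
        ∑ kb : Fin ℓ → Bool, p (x.1, x.2.1, x.2.2.1, kb)
      else 0 with hp'def
  unfold SD
  apply Finset.sup'_le
  intro W _
  have h1 : ∑ t ∈ W, p t - ∑ t ∈ W, p' t ≤ ε := by
    rw [← Finset.sum_sub_distrib]
    rw [← Finset.sum_filter_add_sum_filter_not W
      (fun x : Z × C × (Fin ℓ → Bool) × (Fin ℓ → Bool) => x.2.2.2 = x.2.2.1)]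
    have hA : ∑ t ∈ W.filter (fun x => x.2.2.2 = x.2.2.1), (p t - p' t) ≤ 0 := by
      apply Finset.sum_nonpos
      intro t ht
      have hd : t.2.2.2 = t.2.2.1 := (Finset.mem_filter.mp ht).2
      have : p' t = ∑ kb : Fin ℓ → Bool, p (t.1, t.2.1, t.2.2.1, kb) := by
        simp [hp'def, hd]
      rw [this]
      have hle : p (t.1, t.2.1, t.2.2.1, t.2.2.2) ≤
          ∑ kb : Fin ℓ → Bool, p (t.1, t.2.1, t.2.2.1, kb) :=
        Finset.single_le_sum (f := fun kb => p (t.1, t.2.1, t.2.2.1, kb))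
          (fun kb _ => hp _) (Finset.mem_univ t.2.2.2)
      have ht' : (t.1, t.2.1, t.2.2.1, t.2.2.2) = t := by
        obtain ⟨z, c, ka, kb⟩ := t; simp_all
      rw [ht'] at hle
      linarith
    have hB : ∑ t ∈ W.filter (fun x => ¬ x.2.2.2 = x.2.2.1), (p t - p' t) ≤ ε := by
      have heq : ∀ t ∈ W.filter (fun x => ¬ x.2.2.2 = x.2.2.1), p t - p' t = p t := by
        intro t ht
        have hd : ¬ t.2.2.2 = t.2.2.1 := (Finset.mem_filter.mp ht).2
        simp [hp'def, hd]
      rw [Finset.sum_congr rfl heq]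
      refine le_trans (Finset.sum_le_sum_of_subset_of_nonneg ?_ (fun x _ _ => hp x)) hcorrect
      intro x hx
      have hd : ¬ x.2.2.2 = x.2.2.1 := (Finset.mem_filter.mp hx).2
      simp only [Finset.mem_filter, Finset.mem_univ, true_and]
      exact fun h => hd h.symm
    linarith
  have h2 : ∑ t ∈ W, p' t - ∑ t ∈ W, q t ≤ σ := by
    set W' : Finset (Z × C × (Fin ℓ → Bool)) :=
      Finset.univ.filter (fun w : Z × C × (Fin ℓ → Bool) => (w.1, w.2.1, w.2.2, w.2.2) ∈ W)
      with hW'def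
    have hkey : ∑ t ∈ W, p' t - ∑ t ∈ W, q t =
        (∑ w ∈ W', (fun w : Z × C × (Fin ℓ → Bool) =>
            ∑ kb : Fin ℓ → Bool, p (w.1, w.2.1, w.2.2, kb)) w) -
        ∑ w ∈ W', (fun w : Z × C × (Fin ℓ → Bool) =>
            (∑ ka : Fin ℓ → Bool, ∑ kb : Fin ℓ → Bool, p (w.1, w.2.1, ka, kb)) / 2 ^ ℓ) w := by
      rw [← Finset.sum_sub_distrib, ← Finset.sum_sub_distrib]
      rw [← Finset.sum_filter_add_sum_filter_not W
        (fun x : Z × C × (Fin ℓ → Bool) × (Fin ℓ → Bool) => x.2.2.2 = x.2.2.1)]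
      have hzero : ∑ t ∈ W.filter (fun x => ¬ x.2.2.2 = x.2.2.1), (p' t - q t) = 0 := by
        apply Finset.sum_eq_zero
        intro t ht
        have hd : ¬ t.2.2.2 = t.2.2.1 := (Finset.mem_filter.mp ht).2
        simp [hp'def, hqdef, hd]
      rw [hzero, add_zero]
      apply Finset.sum_nbij' (i := fun t : Z × C × (Fin ℓ → Bool) × (Fin ℓ → Bool) =>
          (t.1, t.2.1, t.2.2.1))
        (j := fun w : Z × C × (Fin ℓ → Bool) => (w.1, w.2.1, w.2.2, w.2.2))
      · intro t ht
        have hm := Finset.mem_filter.mp ht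
        have ht' : (t.1, t.2.1, t.2.2.1, t.2.2.1) = t := by
          obtain ⟨z, c, ka, kb⟩ := t
          simp only at hm ⊢
          rw [hm.2]
        simp only [hW'def, Finset.mem_filter, Finset.mem_univ, true_and]
        rw [ht']; exact hm.1
      · intro w hw
        have hm := (Finset.mem_filter.mp hw).2
        exact Finset.mem_filter.mpr ⟨hm, rfl⟩
      · intro t ht
        have hd : t.2.2.2 = t.2.2.1 := (Finset.mem_filter.mp ht).2
        obtain ⟨z, c, ka, kb⟩ := t
        simp only at hd ⊢
        rw [hd]
      · intro w hw; rfl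
      · intro t ht
        have hd : t.2.2.2 = t.2.2.1 := (Finset.mem_filter.mp ht).2
        simp [hp'def, hqdef, hd]
    rw [hkey]
    refine le_trans ?_ hsec
    unfold SD
    exact Finset.le_sup'
      (f := fun V : Finset (Z × C × (Fin ℓ → Bool)) =>
        ∑ t ∈ V, (fun w : Z × C × (Fin ℓ → Bool) =>
            ∑ kb : Fin ℓ → Bool, p (w.1, w.2.1, w.2.2, kb)) t -
        ∑ t ∈ V, (fun w : Z × C × (Fin ℓ → Bool) =>
            (∑ ka : Fin ℓ → Bool, ∑ kb : Fin ℓ → Bool, p (w.1, w.2.1, ka, kb)) / 2 ^ ℓ) t)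
      (Finset.mem_univ W')
  have := add_le_add h1 h2
  simp only [hqdef] at *
  linarith
end

section
/- Let X and Z be jointly distributed random variables on finite sets, let {h_s : 𝒳 → {0,1}^t}_{s∈𝒮} be any family of functions indexed by 𝒮, and let S be uniformly distributed on 𝒮 and independent of (X, Z). Then H̃∞(X | (Z, S, h_S(X))) ≥ H̃∞(X | Z) − t. (In particular, H̃∞(X | (Z, S)) = H̃∞(X | Z) since S is independent of (X, Z), and revealing the t-bit hash value h_S(X) decreases the average conditional min-entropy by at most t.) -/
/-!
With `G(p) = Σ_b max_a p(a, b)` the optimal guessing probability, `H̃∞ = -log₂ G`. For a fixed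
side information `z` and seed `s`, the fibres `{x | h_s x = c}` partition `X`, so the maxima of
`p(·, z)` over the `2^t` fibres sum to between `max_x p(x, z)` and `2^t · max_x p(x, z)`. Averaging
over the uniform seed gives `G(p) ≤ G(q) ≤ 2^t G(p)` for the joint law `q` of `(X, (Z, S, h_S X))`,
and taking `-log₂` loses at most `t` bits.
-/

open scoped BigOperators Classical

open Finset

universe u v w x

section GuessProb

variable {A : Type u} {B : Type v} [Fintype A] [Fintype B] [Nonempty A]

/-- The optimal probability of guessing `A` from `B`. -/
noncomputable def guessProb (p : A × B → ℝ) : ℝ :=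
  ∑ b : B, univ.sup' univ_nonempty fun a : A => p (a, b)

theorem Havg_eq_neg_logb_guessProb (p : A × B → ℝ) : Havg p = -Real.logb 2 (guessProb p) := rfl

theorem sum_le_card_mul_guessProb (p : A × B → ℝ) :
    ∑ w, p w ≤ Fintype.card A * guessProb p := by
  rw [guessProb, mul_sum, Fintype.sum_prod_type, sum_comm]
  gcongr with b
  calc ∑ a, p (a, b) ≤ ∑ _a : A, univ.sup' univ_nonempty fun a : A => p (a, b) :=
        sum_le_sum fun a _ => le_sup' (fun a : A => p (a, b)) (mem_univ a)
    _ = _ := by simp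

theorem guessProb_pos (p : A × B → ℝ) (hsum : 0 < ∑ w, p w) : 0 < guessProb p :=
  pos_of_mul_pos_right (hsum.trans_le (sum_le_card_mul_guessProb p)) (Nat.cast_nonneg _)

theorem guessProb_div (p : A × B → ℝ) {c : ℝ} (hc : 0 ≤ c) :
    guessProb (fun w => p w / c) = guessProb p / c := by
  rw [guessProb, guessProb, sum_div]
  refine sum_congr rfl fun b _ => ?_
  exact (apply_sup'_eq_sup'_comp univ_nonempty (· / c)
    fun x y => (max_div_div_right hc x y).symm).symm

theorem guessProb_prod_indep {S : Type w} [Fintype S] (p : A × B → ℝ) :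
    guessProb (fun w : A × (B × S) => p (w.1, w.2.1)) = Fintype.card S * guessProb p := by
  simp [guessProb, Fintype.sum_prod_type, mul_sum]

end GuessProb

section Leakage

variable {A : Type u} {C : Type w} [Fintype A] [Fintype C] [DecidableEq C] [Nonempty A]

theorem sup'_le_sum_sup'_ite (f : A → ℝ) (hf : 0 ≤ f) (g : A → C) :
    univ.sup' univ_nonempty f ≤
      ∑ c, univ.sup' univ_nonempty fun a => if g a = c then f a else 0 := by
  obtain ⟨a₀, -, ha₀⟩ := exists_mem_eq_sup' univ_nonempty f
  have hnonneg (c : C) : 0 ≤ univ.sup' univ_nonempty fun a => if g a = c then f a else 0 :=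
    (ite_nonneg (hf a₀) le_rfl).trans
      (le_sup' (fun a => if g a = c then f a else 0) (mem_univ a₀))
  calc univ.sup' univ_nonempty f = if g a₀ = g a₀ then f a₀ else 0 := by simp [ha₀]
    _ ≤ univ.sup' univ_nonempty fun a => if g a = g a₀ then f a else 0 :=
        le_sup' (fun a => if g a = g a₀ then f a else 0) (mem_univ a₀)
    _ ≤ _ := single_le_sum (fun c _ => hnonneg c) (mem_univ (g a₀))

theorem sum_sup'_ite_le_card_mul (f : A → ℝ) (hf : 0 ≤ f) (g : A → C) :
    ∑ c, univ.sup' univ_nonempty (fun a => if g a = c then f a else 0)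
      ≤ Fintype.card C * univ.sup' univ_nonempty f := by
  have hsup_nonneg : 0 ≤ univ.sup' univ_nonempty f :=
    (hf (Classical.arbitrary A)).trans (le_sup' f (mem_univ _))
  calc ∑ c, univ.sup' univ_nonempty (fun a => if g a = c then f a else 0)
      ≤ ∑ _c : C, univ.sup' univ_nonempty f := by
        refine sum_le_sum fun c _ => sup'_le _ _ fun a _ => ?_
        split_ifs
        exacts [le_sup' f (mem_univ a), hsup_nonneg]
    _ = _ := by simp

variable {B : Type v} {S : Type x} [Fintype B] [Fintype S]

theorem card_mul_guessProb_le_guessProb_hash (h : S → A → C) (p : A × B → ℝ) (hp : 0 ≤ p) :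
    Fintype.card S * guessProb p ≤
      guessProb fun w : A × (B × S × C) =>
        if h w.2.2.1 w.1 = w.2.2.2 then p (w.1, w.2.1) else 0 := by
  simp only [guessProb, Fintype.sum_prod_type, mul_sum]
  gcongr with b
  calc _ = ∑ _s : S, univ.sup' univ_nonempty fun a => p (a, b) := by simp
    _ ≤ _ := sum_le_sum fun s _ => sup'_le_sum_sup'_ite _ (fun a => hp (a, b)) (h s)

theorem guessProb_hash_le_card_mul_guessProb (h : S → A → C) (p : A × B → ℝ) (hp : 0 ≤ p) :
    (guessProb fun w : A × (B × S × C) =>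
        if h w.2.2.1 w.1 = w.2.2.2 then p (w.1, w.2.1) else 0) ≤
      Fintype.card S * Fintype.card C * guessProb p := by
  simp only [guessProb, Fintype.sum_prod_type, mul_sum]
  gcongr with b
  calc _ ≤ ∑ _s : S, Fintype.card C * univ.sup' univ_nonempty fun a => p (a, b) :=
        sum_le_sum fun s _ => sum_sup'_ite_le_card_mul _ (fun a => hp (a, b)) (h s)
    _ = _ := by simp [mul_assoc]

end Leakage

/-- revealing a uniformly seeded `t`-bit hash value of `X` decreases the
average conditional min-entropy by at most `t`:
`H̃∞(X | (Z, S, h_S(X))) ≥ H̃∞(X | Z) − t`; moreover `H̃∞(X | (Z, S)) = H̃∞(X | Z)` since the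
seed `S` is independent of `(X, Z)`. -/
theorem avg_min_entropy_hash_leakage
    {X Z S : Type*} [Fintype X] [Fintype Z] [Fintype S] [Nonempty X] [Nonempty S]
    (t : ℕ) (h : S → X → (Fin t → Bool))
    (p : X × Z → ℝ) (hp : ∀ x, 0 ≤ p x) (hsum : ∑ x : X × Z, p x = 1) :
    Havg (fun w : X × (Z × S × (Fin t → Bool)) =>
        (if h w.2.2.1 w.1 = w.2.2.2 then p (w.1, w.2.1) else 0) / (Fintype.card S : ℝ))
      ≥ Havg p - t
    ∧ Havg (fun w : X × (Z × S) => p (w.1, w.2.1) / (Fintype.card S : ℝ)) = Havg p := by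
  have hS : (0 : ℝ) < Fintype.card S := by exact_mod_cast Fintype.card_pos
  have hG : 0 < guessProb p := guessProb_pos p (hsum ▸ one_pos)
  simp only [Havg_eq_neg_logb_guessProb, guessProb_div _ hS.le, guessProb_prod_indep,
    mul_div_cancel_left₀ _ hS.ne', and_true]
  set q := fun w : X × (Z × S × (Fin t → Bool)) =>
    if h w.2.2.1 w.1 = w.2.2.2 then p (w.1, w.2.1) else 0
  have hq_pos : 0 < guessProb q / Fintype.card S :=
    div_pos ((mul_pos hS hG).trans_le (card_mul_guessProb_le_guessProb_hash h p hp)) hS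
  have hq_le : guessProb q / Fintype.card S ≤ 2 ^ t * guessProb p := by
    rw [div_le_iff₀ hS]
    simpa [mul_comm, mul_left_comm] using guessProb_hash_le_card_mul_guessProb h p hp
  calc -Real.logb 2 (guessProb p) - t = -Real.logb 2 (2 ^ t * guessProb p) := by
        rw [Real.logb_mul (by positivity) hG.ne', Real.logb_pow, Real.logb_self_eq_one one_lt_two]
        ring
    _ ≤ -Real.logb 2 (guessProb q / Fintype.card S) :=
        neg_le_neg (Real.logb_le_logb_of_le one_lt_two hq_pos hq_le)
end

section
/- (Composition theorem: IND-q_e-CEA iKEM + IND-OT DEM ⇒ IND-q_e-CPA hybrid encryption.) Let (X, Z) be jointly distributed random variables on finite sets, let R₁, …, R_{q_e+1} be i.i.d. uniform on a finite set ℛ and independent of (X, Z), and let Enc : 𝒳 × ℛ → 𝒞₁ × {0,1}^ℓ be the iKEM encapsulation; write (C₁ⁱ, Kⁱ) = Enc(X, Rᵢ) for i = 1, …, q_e and (C₁*, K*) = Enc(X, R_{q_e+1}). Let D : {0,1}^ℓ × ℳ → 𝒞₂ be a deterministic DEM encryption over a finite message set ℳ. Consider an adaptive adversary specified by functions g₁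 : 𝒵 → ℳ and gᵢ : 𝒵 × (𝒞₁ × 𝒞₂)^{i−1} → ℳ for i = 2, …, q_e (choosing the i-th encryption-oracle query message mᵢ from Z and previous responses), where the i-th oracle response is (C₁ⁱ, D(Kⁱ, mᵢ)); by A₁ : 𝒵 × (𝒞₁ × 𝒞₂)^{q_e} → ℳ × ℳ × 𝒮t choosing the challenge message pair and state (m₀, m₁, st); and by A₂ : 𝒮t × 𝒞₁ × 𝒞₂ → {0,1}. Assume: (i) SD((Z, C₁*, K*, V); (Z, C₁*, U_ℓ, V)) ≤ σ, where V = ((C₁ⁱ, Kⁱ))_{i=1,…,q_e} and U_ℓ is uniform on {0,1}^ℓ independent of everything else; and (ii) for all m₀, m₁ ∈ ℳ and every function f : 𝒞₂ → {0,1}, |Pr_{k ← U_ℓ, b ← U_1}[f(D(k, m_b)) = b] − 1/2| ≤ σ′. Then for a uniform bit b independent of everything else, |Pr[A₂(st, C₁*, D(K*, m_b)) = b] − 1/2| ≤ σ + σ′. -/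
open scoped BigOperators Classical

/-- Responses of the adaptive encryption oracle: the `i`-th query message is chosen by
`g i` from the side information `z` and the previous `i − 1` responses, and the `i`-th
response is `(C₁ⁱ, D(Kⁱ, mᵢ))` where `(C₁ⁱ, Kⁱ) = Enc(x, rᵢ)` uses fresh randomness `rᵢ`. -/
noncomputable def resps {𝒳 𝒵 ℛ 𝒞₁ 𝒞₂ ℳ K : Type*} {qe : ℕ}
    (Enc : 𝒳 × ℛ → 𝒞₁ × K) (D : K → ℳ → 𝒞₂)
    (g : (i : Fin qe) → 𝒵 × (Fin i → 𝒞₁ × 𝒞₂) → ℳ)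
    (x : 𝒳) (z : 𝒵) (r : Fin qe → ℛ) : Fin qe → 𝒞₁ × 𝒞₂
  | i =>
    let m := g i (z, fun j => resps Enc D g x z r ⟨j.1, j.2.trans i.2⟩)
    ((Enc (x, r i)).1, D (Enc (x, r i)).2 m)
  termination_by i => i.1

/-!
One hybrid step. The probability that `A₂` guesses the bit is a `[0, 1]`-valued function of the
view `(Z, C₁*, K*, V)`, since the oracle responses are determined by `Z` and the query
key–ciphertext pairs `V`. Replacing `K*` by an independent uniform key therefore moves it by at
most `SD ≤ σ`. In the resulting game, once `x`, `z` and the randomness are fixed, the adversary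
is a one-time adversary against the DEM under a uniform key, so its success probability is
within `σ'` of `1/2`.
-/

open Finset

section StatisticalDistance

variable {T : Type*} [Fintype T]

lemma sum_sub_mul_le_SD (p q F : T → ℝ) (hF₀ : ∀ t, 0 ≤ F t) (hF₁ : ∀ t, F t ≤ 1) :
    ∑ t, (p t - q t) * F t ≤ SD p q :=
  calc ∑ t, (p t - q t) * F t ≤ ∑ t, if q t ≤ p t then p t - q t else 0 :=
        sum_le_sum fun t _ => by split_ifs <;> nlinarith [hF₀ t, hF₁ t]
    _ = ∑ t ∈ univ.filter (fun t => q t ≤ p t), p t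
          - ∑ t ∈ univ.filter (fun t => q t ≤ p t), q t := by
        rw [← sum_filter, sum_sub_distrib]
    _ ≤ SD p q := le_sup' (fun W : Finset T => ∑ t ∈ W, p t - ∑ t ∈ W, q t) (mem_univ _)

lemma abs_sum_mul_sub_sum_mul_le_SD (p q F : T → ℝ) (hpq : ∑ t, p t = ∑ t, q t)
    (hF₀ : ∀ t, 0 ≤ F t) (hF₁ : ∀ t, F t ≤ 1) :
    |∑ t, p t * F t - ∑ t, q t * F t| ≤ SD p q := by
  have hdiff : ∑ t, p t * F t - ∑ t, q t * F t = ∑ t, (p t - q t) * F t := by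
    simp only [sub_mul, sum_sub_distrib]
  have hcompl : ∑ t, (p t - q t) * (1 - F t) = -∑ t, (p t - q t) * F t := by
    simp only [mul_sub, mul_one, sum_sub_distrib, hpq, sub_self, zero_sub]
  rw [hdiff, abs_le]
  constructor
  · linarith [sum_sub_mul_le_SD p q (fun t => 1 - F t) (fun t => by linarith [hF₁ t])
      (fun t => by linarith [hF₀ t])]
  · exact sum_sub_mul_le_SD p q F hF₀ hF₁

end StatisticalDistance

lemma abs_sum_mul_sub_le_of_abs_sub_le {α : Type*} [Fintype α] (μ G : α → ℝ) {c ε : ℝ}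
    (hμ₀ : ∀ a, 0 ≤ μ a) (hμ₁ : ∑ a, μ a = 1) (hG : ∀ a, |G a - c| ≤ ε) :
    |∑ a, μ a * G a - c| ≤ ε :=
  calc |∑ a, μ a * G a - c| = |∑ a, μ a * (G a - c)| := by
        simp only [mul_sub, sum_sub_distrib, ← sum_mul, hμ₁, one_mul]
    _ ≤ ∑ a, μ a * ε := (abs_sum_le_sum_abs (fun a => μ a * (G a - c)) univ).trans <|
        sum_le_sum fun a _ => by
          rw [abs_mul, abs_of_nonneg (hμ₀ a)]
          exact mul_le_mul_of_nonneg_left (hG a) (hμ₀ a)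
    _ = ε := by rw [← sum_mul, hμ₁, one_mul]

lemma sum_sum_sum_ite_mul {α ρ Z Y : Type*} [Fintype α] [Fintype ρ] [Fintype Z] [Fintype Y]
    (μ : α → Z → ℝ) (P : α → ρ → Y → Prop) [∀ a r y, Decidable (P a r y)] (f : α → ρ → Y)
    (hP : ∀ a r y, P a r y ↔ f a r = y) (F : Z × Y → ℝ) :
    ∑ w : Z × Y, (∑ a, ∑ r, μ a w.1 * if P a r w.2 then 1 else 0) * F w
      = ∑ a, ∑ z, ∑ r, μ a z * F (z, f a r) := by
  simp only [hP, Fintype.sum_prod_type, sum_mul, mul_assoc, ite_mul, one_mul, zero_mul]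
  calc _ = ∑ z, ∑ a, ∑ r, μ a z * F (z, f a r) := sum_congr rfl fun z _ => by
        rw [sum_comm]
        exact sum_congr rfl fun a _ => by rw [sum_comm]; simp
    _ = _ := sum_comm

lemma sum_mul_sum_middle {Z C K V : Type*} [Fintype Z] [Fintype C] [Fintype K] [Fintype V]
    (G : Z × C × V → ℝ) (F : Z × C × K × V → ℝ) :
    ∑ w, G (w.1, w.2.1, w.2.2.2) * F w = ∑ u : Z × C × V, G u * ∑ k, F (u.1, u.2.1, k, u.2.2) := by
  simp only [Fintype.sum_prod_type, mul_sum]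
  exact sum_congr rfl fun z _ => sum_congr rfl fun c _ => sum_comm

lemma sum_div_card_pow_eq {ℛ : Type*} [Fintype ℛ] [Nonempty ℛ] (n : ℕ) (c : ℝ) :
    ∑ _r : Fin n → ℛ, c / (Fintype.card ℛ : ℝ) ^ n = c := by
  have hcard : (Fintype.card ℛ : ℝ) ^ n ≠ 0 :=
    pow_ne_zero _ (Nat.cast_ne_zero.2 Fintype.card_ne_zero)
  rw [sum_const, card_univ, Fintype.card_fun, Fintype.card_fin, nsmul_eq_mul, Nat.cast_pow,
    mul_div_cancel₀ _ hcard]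

noncomputable section KEMViews

variable {𝒳 𝒵 ℛ 𝒞₁ K : Type*} {qe : ℕ}

def kemView (Enc : 𝒳 × ℛ → 𝒞₁ × K) (x : 𝒳) (rv : Fin (qe + 1) → ℛ) :
    𝒞₁ × K × (Fin qe → 𝒞₁ × K) :=
  ((Enc (x, rv (Fin.last qe))).1, (Enc (x, rv (Fin.last qe))).2, fun i => Enc (x, rv i.castSucc))

lemma kemView_eq_iff (Enc : 𝒳 × ℛ → 𝒞₁ × K) (x : 𝒳) (rv : Fin (qe + 1) → ℛ)
    (y : 𝒞₁ × K × (Fin qe → 𝒞₁ × K)) :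
    (Enc (x, rv (Fin.last qe)) = (y.1, y.2.1) ∧ ∀ i : Fin qe, y.2.2 i = Enc (x, rv i.castSucc))
      ↔ kemView Enc x rv = y := by
  obtain ⟨c, k, v⟩ := y
  simp only [kemView, Prod.ext_iff, funext_iff, eq_comm, and_assoc]

variable [Fintype 𝒳] [Fintype ℛ]

/-- The law of `(Z, C₁*, K*, V)`; `idealDensity` is that of `(Z, C₁*, U_ℓ, V)`. Both are
written verbatim as in hypothesis (i), so that it applies to them without conversion. -/
def realDensity {ℓ : ℕ} (Enc : 𝒳 × ℛ → 𝒞₁ × (Fin ℓ → Bool)) (p : 𝒳 × 𝒵 → ℝ)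
    (w : 𝒵 × 𝒞₁ × (Fin ℓ → Bool) × (Fin qe → 𝒞₁ × (Fin ℓ → Bool))) : ℝ :=
  ∑ x : 𝒳, ∑ rv : Fin (qe + 1) → ℛ,
    (p (x, w.1) / (Fintype.card ℛ : ℝ) ^ (qe + 1)) *
      (if Enc (x, rv (Fin.last qe)) = (w.2.1, w.2.2.1)
          ∧ (∀ i : Fin qe, w.2.2.2 i = Enc (x, rv i.castSucc))
        then 1 else 0)

def idealDensity {ℓ : ℕ} (Enc : 𝒳 × ℛ → 𝒞₁ × (Fin ℓ → Bool)) (p : 𝒳 × 𝒵 → ℝ)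
    (w : 𝒵 × 𝒞₁ × (Fin ℓ → Bool) × (Fin qe → 𝒞₁ × (Fin ℓ → Bool))) : ℝ :=
  ∑ x : 𝒳, ∑ rv : Fin (qe + 1) → ℛ,
    (p (x, w.1) / ((Fintype.card ℛ : ℝ) ^ (qe + 1) * 2 ^ ℓ)) *
      (if (Enc (x, rv (Fin.last qe))).1 = w.2.1
          ∧ (∀ i : Fin qe, w.2.2.2 i = Enc (x, rv i.castSucc))
        then 1 else 0)

variable [Fintype 𝒵] [Fintype 𝒞₁]

lemma sum_realDensity_mul {ℓ : ℕ} (Enc : 𝒳 × ℛ → 𝒞₁ × (Fin ℓ → Bool)) (p : 𝒳 × 𝒵 → ℝ)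
    (F : 𝒵 × 𝒞₁ × (Fin ℓ → Bool) × (Fin qe → 𝒞₁ × (Fin ℓ → Bool)) → ℝ) :
    ∑ w, realDensity Enc p w * F w
      = ∑ x, ∑ z, ∑ rv : Fin (qe + 1) → ℛ,
          p (x, z) / (Fintype.card ℛ : ℝ) ^ (qe + 1) * F (z, kemView Enc x rv) :=
  sum_sum_sum_ite_mul (ρ := Fin (qe + 1) → ℛ)
    (Y := 𝒞₁ × (Fin ℓ → Bool) × (Fin qe → 𝒞₁ × (Fin ℓ → Bool)))
    (fun x z => p (x, z) / (Fintype.card ℛ : ℝ) ^ (qe + 1))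
    (fun x rv y => Enc (x, rv (Fin.last qe)) = (y.1, y.2.1)
      ∧ ∀ i : Fin qe, y.2.2 i = Enc (x, rv i.castSucc)) (kemView Enc) (kemView_eq_iff Enc) F

lemma sum_idealDensity_mul {ℓ : ℕ} (Enc : 𝒳 × ℛ → 𝒞₁ × (Fin ℓ → Bool)) (p : 𝒳 × 𝒵 → ℝ)
    (F : 𝒵 × 𝒞₁ × (Fin ℓ → Bool) × (Fin qe → 𝒞₁ × (Fin ℓ → Bool)) → ℝ) :
    ∑ w, idealDensity Enc p w * F w
      = ∑ x, ∑ z, ∑ rv : Fin (qe + 1) → ℛ, p (x, z) / (Fintype.card ℛ : ℝ) ^ (qe + 1) *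
          ∑ k, 1 / 2 ^ ℓ * F (z, (kemView Enc x rv).1, k, (kemView Enc x rv).2.2) := by
  let N : ℝ := (Fintype.card ℛ : ℝ) ^ (qe + 1)
  let G (u : 𝒵 × 𝒞₁ × (Fin qe → 𝒞₁ × (Fin ℓ → Bool))) : ℝ :=
    ∑ x : 𝒳, ∑ rv : Fin (qe + 1) → ℛ, p (x, u.1) / (N * 2 ^ ℓ) *
      (if (Enc (x, rv (Fin.last qe))).1 = u.2.1
          ∧ (∀ i : Fin qe, u.2.2 i = Enc (x, rv i.castSucc)) then 1 else 0)
  calc ∑ w, idealDensity Enc p w * F w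
      = ∑ u, G u * ∑ k, F (u.1, u.2.1, k, u.2.2) := sum_mul_sum_middle G F
    _ = ∑ x, ∑ z, ∑ rv : Fin (qe + 1) → ℛ, p (x, z) / (N * 2 ^ ℓ) *
          ∑ k, F (z, (kemView Enc x rv).1, k, (kemView Enc x rv).2.2) :=
        sum_sum_sum_ite_mul (ρ := Fin (qe + 1) → ℛ) (Y := 𝒞₁ × (Fin qe → 𝒞₁ × (Fin ℓ → Bool)))
          (fun x z => p (x, z) / (N * 2 ^ ℓ))
          (fun x rv y => (Enc (x, rv (Fin.last qe))).1 = y.1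
            ∧ ∀ i : Fin qe, y.2 i = Enc (x, rv i.castSucc))
          (fun x rv => ((kemView Enc x rv).1, (kemView Enc x rv).2.2))
          (fun x rv y => by simp only [kemView, Prod.ext_iff, funext_iff, eq_comm]) _
    _ = _ := by
        refine sum_congr rfl fun x _ => sum_congr rfl fun z _ => sum_congr rfl fun rv _ => ?_
        rw [mul_sum, mul_sum]
        exact sum_congr rfl fun k _ => by ring

lemma sum_realDensity_eq_sum_idealDensity {ℓ : ℕ} (Enc : 𝒳 × ℛ → 𝒞₁ × (Fin ℓ → Bool))
    (p : 𝒳 × 𝒵 → ℝ) :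
    ∑ w, realDensity (qe := qe) Enc p w = ∑ w, idealDensity (qe := qe) Enc p w := by
  have hkeys : ∑ _k : Fin ℓ → Bool, (1 / 2 ^ ℓ : ℝ) = 1 := by simp
  have hreal := sum_realDensity_mul (qe := qe) Enc p fun _ => 1
  have hideal := sum_idealDensity_mul (qe := qe) Enc p fun _ => 1
  simp only [mul_one, hkeys] at hreal hideal
  rw [hreal, hideal]

end KEMViews

noncomputable section Oracle

variable {𝒳 𝒳' 𝒵 ℛ ℛ' 𝒞₁ 𝒞₂ ℳ K : Type*} {qe : ℕ}

lemma resps_congr (Enc : 𝒳 × ℛ → 𝒞₁ × K) (Enc' : 𝒳' × ℛ' → 𝒞₁ × K) (D : K → ℳ → 𝒞₂)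
    (g : (i : Fin qe) → 𝒵 × (Fin i → 𝒞₁ × 𝒞₂) → ℳ) (x : 𝒳) (x' : 𝒳') (z : 𝒵)
    (r : Fin qe → ℛ) (r' : Fin qe → ℛ') (h : ∀ i, Enc (x, r i) = Enc' (x', r' i)) :
    ∀ i, resps Enc D g x z r i = resps Enc' D g x' z r' i
  | i => by
    rw [resps, resps, h i]
    congr 4
    funext j
    exact resps_congr Enc Enc' D g x x' z r r' h _
  termination_by i => i.1
  decreasing_by exact j.2

variable {𝒮t : Type*}

/-- The oracle responses are recomputed from the query key–ciphertext pairs, fed to `resps`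
through the dummy encapsulation `Prod.snd`. -/
def cpaWinProb (D : K → ℳ → 𝒞₂) (g : (i : Fin qe) → 𝒵 × (Fin i → 𝒞₁ × 𝒞₂) → ℳ)
    (A₁ : 𝒵 × (Fin qe → 𝒞₁ × 𝒞₂) → ℳ × ℳ × 𝒮t) (A₂ : 𝒮t × 𝒞₁ × 𝒞₂ → Bool)
    (w : 𝒵 × 𝒞₁ × K × (Fin qe → 𝒞₁ × K)) : ℝ :=
  let a := A₁ (w.1, resps (Prod.snd : Unit × (𝒞₁ × K) → 𝒞₁ × K) D g () w.1 w.2.2.2)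
  1 / 2 * (if A₂ (a.2.2, w.2.1, D w.2.2.1 a.1) = false then 1 else 0)
    + 1 / 2 * (if A₂ (a.2.2, w.2.1, D w.2.2.1 a.2.1) = true then 1 else 0)

lemma cpaWinProb_nonneg (D : K → ℳ → 𝒞₂) (g : (i : Fin qe) → 𝒵 × (Fin i → 𝒞₁ × 𝒞₂) → ℳ)
    (A₁ : 𝒵 × (Fin qe → 𝒞₁ × 𝒞₂) → ℳ × ℳ × 𝒮t) (A₂ : 𝒮t × 𝒞₁ × 𝒞₂ → Bool)
    (w : 𝒵 × 𝒞₁ × K × (Fin qe → 𝒞₁ × K)) : 0 ≤ cpaWinProb D g A₁ A₂ w := by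
  dsimp only [cpaWinProb]
  split_ifs <;> norm_num

lemma cpaWinProb_le_one (D : K → ℳ → 𝒞₂) (g : (i : Fin qe) → 𝒵 × (Fin i → 𝒞₁ × 𝒞₂) → ℳ)
    (A₁ : 𝒵 × (Fin qe → 𝒞₁ × 𝒞₂) → ℳ × ℳ × 𝒮t) (A₂ : 𝒮t × 𝒞₁ × 𝒞₂ → Bool)
    (w : 𝒵 × 𝒞₁ × K × (Fin qe → 𝒞₁ × K)) : cpaWinProb D g A₁ A₂ w ≤ 1 := by
  dsimp only [cpaWinProb]
  split_ifs <;> norm_num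

lemma abs_sum_cpaWinProb_sub_half_le {ℓ : ℕ} (D : (Fin ℓ → Bool) → ℳ → 𝒞₂) {σ' : ℝ}
    (hDEM : ∀ m₀ m₁ : ℳ, ∀ f : 𝒞₂ → Bool,
      |(∑ k : Fin ℓ → Bool, (1 / (2 ^ ℓ : ℝ)) *
          ((1 / 2) * (if f (D k m₀) = false then 1 else 0)
            + (1 / 2) * (if f (D k m₁) = true then 1 else 0))) - 1 / 2| ≤ σ')
    (g : (i : Fin qe) → 𝒵 × (Fin i → 𝒞₁ × 𝒞₂) → ℳ)
    (A₁ : 𝒵 × (Fin qe → 𝒞₁ × 𝒞₂) → ℳ × ℳ × 𝒮t) (A₂ : 𝒮t × 𝒞₁ × 𝒞₂ → Bool)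
    (z : 𝒵) (c : 𝒞₁) (v : Fin qe → 𝒞₁ × (Fin ℓ → Bool)) :
    |∑ k, 1 / 2 ^ ℓ * cpaWinProb D g A₁ A₂ (z, c, k, v) - 1 / 2| ≤ σ' :=
  let a := A₁ (z, resps (Prod.snd : Unit × (𝒞₁ × (Fin ℓ → Bool)) → _) D g () z v)
  hDEM a.1 a.2.1 fun c₂ => A₂ (a.2.2, c, c₂)

end Oracle

theorem hybrid_encryption_ind_qe_cpa_general
    {𝒳 𝒵 ℛ 𝒞₁ 𝒞₂ ℳ 𝒮t : Type*}
    [Fintype 𝒳] [Fintype 𝒵] [Fintype ℛ] [Fintype 𝒞₁]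
    [Nonempty ℛ]
    (ℓ qe : ℕ)
    (Enc : 𝒳 × ℛ → 𝒞₁ × (Fin ℓ → Bool))  -- iKEM encapsulation
    (D : (Fin ℓ → Bool) → ℳ → 𝒞₂)        -- deterministic DEM encryption
    (p : 𝒳 × 𝒵 → ℝ) (hp : ∀ w, 0 ≤ p w) (hsum : ∑ w : 𝒳 × 𝒵, p w = 1)
    (σ σ' : ℝ)
    -- (i) IND-q_e-CEA security of the iKEM: SD((Z, C₁*, K*, V); (Z, C₁*, U_ℓ, V)) ≤ σ
    (hKEM : SD
      (fun w : 𝒵 × 𝒞₁ × (Fin ℓ → Bool) × (Fin qe → 𝒞₁ × (Fin ℓ → Bool)) =>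
        ∑ x : 𝒳, ∑ rv : Fin (qe + 1) → ℛ,
          (p (x, w.1) / (Fintype.card ℛ : ℝ) ^ (qe + 1)) *
            (if Enc (x, rv (Fin.last qe)) = (w.2.1, w.2.2.1)
                ∧ (∀ i : Fin qe, w.2.2.2 i = Enc (x, rv i.castSucc))
              then 1 else 0))
      (fun w : 𝒵 × 𝒞₁ × (Fin ℓ → Bool) × (Fin qe → 𝒞₁ × (Fin ℓ → Bool)) =>
        ∑ x : 𝒳, ∑ rv : Fin (qe + 1) → ℛ,
          (p (x, w.1) / ((Fintype.card ℛ : ℝ) ^ (qe + 1) * 2 ^ ℓ)) *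
            (if (Enc (x, rv (Fin.last qe))).1 = w.2.1
                ∧ (∀ i : Fin qe, w.2.2.2 i = Enc (x, rv i.castSucc))
              then 1 else 0))
      ≤ σ)
    -- (ii) IND-OT security of the DEM under a uniform key
    (hDEM : ∀ m₀ m₁ : ℳ, ∀ f : 𝒞₂ → Bool,
      |(∑ k : Fin ℓ → Bool, (1 / (2 ^ ℓ : ℝ)) *
          ((1 / 2) * (if f (D k m₀) = false then 1 else 0)
            + (1 / 2) * (if f (D k m₁) = true then 1 else 0))) - 1 / 2| ≤ σ') :
    -- conclusion: every adaptive q_e-query CPA adversary has advantage ≤ σ + σ'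
    ∀ (g : (i : Fin qe) → 𝒵 × (Fin i → 𝒞₁ × 𝒞₂) → ℳ)
      (A₁ : 𝒵 × (Fin qe → 𝒞₁ × 𝒞₂) → ℳ × ℳ × 𝒮t)
      (A₂ : 𝒮t × 𝒞₁ × 𝒞₂ → Bool),
      |(∑ x : 𝒳, ∑ z : 𝒵, ∑ rv : Fin (qe + 1) → ℛ,
          (p (x, z) / (Fintype.card ℛ : ℝ) ^ (qe + 1)) *
            (let v := resps Enc D g x z (fun i => rv i.castSucc)
             let a := A₁ (z, v)
             let ck := Enc (x, rv (Fin.last qe))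
             (1 / 2) * (if A₂ (a.2.2, ck.1, D ck.2 a.1) = false then 1 else 0)
               + (1 / 2) * (if A₂ (a.2.2, ck.1, D ck.2 a.2.1) = true then 1 else 0)))
        - 1 / 2| ≤ σ + σ' := by
  intro g A₁ A₂
  set win := cpaWinProb D g A₁ A₂
  have hweights : ∑ x, ∑ z, ∑ _rv : Fin (qe + 1) → ℛ,
      p (x, z) / (Fintype.card ℛ : ℝ) ^ (qe + 1) = 1 := by
    simp only [sum_div_card_pow_eq]
    rw [← hsum, Fintype.sum_prod_type]
  have hresps : ∀ x z (r : Fin qe → ℛ), resps Enc D g x z r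
      = resps (Prod.snd : Unit × (𝒞₁ × (Fin ℓ → Bool)) → _) D g () z (fun i => Enc (x, r i)) :=
    fun x z r => funext (resps_congr _ _ D g x () z r _ fun _ => rfl)
  have hideal : |∑ w, idealDensity Enc p w * win w - 1 / 2| ≤ σ' := by
    rw [sum_idealDensity_mul]
    simp only [← Fintype.sum_prod_type'] at hweights ⊢
    exact abs_sum_mul_sub_le_of_abs_sub_le _ _ (fun ω => div_nonneg (hp _) (by positivity))
      hweights fun ω => abs_sum_cpaWinProb_sub_half_le D hDEM g A₁ A₂ _ _ _
  calc _ = |∑ w, realDensity Enc p w * win w - 1 / 2| := by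
        rw [sum_realDensity_mul]
        simp only [win, cpaWinProb, kemView, hresps]
    _ ≤ |∑ w, realDensity Enc p w * win w - ∑ w, idealDensity Enc p w * win w|
        + |∑ w, idealDensity Enc p w * win w - 1 / 2| := abs_sub_le _ _ _
    _ ≤ σ + σ' := add_le_add ((abs_sum_mul_sub_sum_mul_le_SD _ _ win
        (sum_realDensity_eq_sum_idealDensity Enc p)
        (cpaWinProb_nonneg D g A₁ A₂) (cpaWinProb_le_one D g A₁ A₂)).trans hKEM) hideal

/-- composition theorem: IND-q_e-CEA iKEM + IND-OT DEM ⇒ IND-q_e-CPA hybrid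
encryption: if the challenge key `K*` is σ-close to uniform given the side information, the
challenge ciphertext and the `q_e` query key–ciphertext pairs `V`, and the DEM is σ′-one-time
secure, then every adaptive `q_e`-query CPA adversary `(g, A₁, A₂)` against the hybrid
encryption has advantage at most `σ + σ′`. -/
theorem hybrid_encryption_ind_qe_cpa
    {𝒳 𝒵 ℛ 𝒞₁ 𝒞₂ ℳ 𝒮t : Type*}
    [Fintype 𝒳] [Fintype 𝒵] [Fintype ℛ] [Fintype 𝒞₁] [Fintype 𝒞₂] [Fintype ℳ] [Fintype 𝒮t]
    [Nonempty ℛ]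
    (ℓ qe : ℕ)
    (Enc : 𝒳 × ℛ → 𝒞₁ × (Fin ℓ → Bool))  -- iKEM encapsulation
    (D : (Fin ℓ → Bool) → ℳ → 𝒞₂)        -- deterministic DEM encryption
    (p : 𝒳 × 𝒵 → ℝ) (hp : ∀ w, 0 ≤ p w) (hsum : ∑ w : 𝒳 × 𝒵, p w = 1)
    (σ σ' : ℝ)
    -- (i) IND-q_e-CEA security of the iKEM: SD((Z, C₁*, K*, V); (Z, C₁*, U_ℓ, V)) ≤ σ
    (hKEM : SD
      (fun w : 𝒵 × 𝒞₁ × (Fin ℓ → Bool) × (Fin qe → 𝒞₁ × (Fin ℓ → Bool)) =>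
        ∑ x : 𝒳, ∑ rv : Fin (qe + 1) → ℛ,
          (p (x, w.1) / (Fintype.card ℛ : ℝ) ^ (qe + 1)) *
            (if Enc (x, rv (Fin.last qe)) = (w.2.1, w.2.2.1)
                ∧ (∀ i : Fin qe, w.2.2.2 i = Enc (x, rv i.castSucc))
              then 1 else 0))
      (fun w : 𝒵 × 𝒞₁ × (Fin ℓ → Bool) × (Fin qe → 𝒞₁ × (Fin ℓ → Bool)) =>
        ∑ x : 𝒳, ∑ rv : Fin (qe + 1) → ℛ,
          (p (x, w.1) / ((Fintype.card ℛ : ℝ) ^ (qe + 1) * 2 ^ ℓ)) *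
            (if (Enc (x, rv (Fin.last qe))).1 = w.2.1
                ∧ (∀ i : Fin qe, w.2.2.2 i = Enc (x, rv i.castSucc))
              then 1 else 0))
      ≤ σ)
    -- (ii) IND-OT security of the DEM under a uniform key
    (hDEM : ∀ m₀ m₁ : ℳ, ∀ f : 𝒞₂ → Bool,
      |(∑ k : Fin ℓ → Bool, (1 / (2 ^ ℓ : ℝ)) *
          ((1 / 2) * (if f (D k m₀) = false then 1 else 0)
            + (1 / 2) * (if f (D k m₁) = true then 1 else 0))) - 1 / 2| ≤ σ') :
    -- conclusion: every adaptive q_e-query CPA adversary has advantage ≤ σ + σ'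
    ∀ (g : (i : Fin qe) → 𝒵 × (Fin i → 𝒞₁ × 𝒞₂) → ℳ)
      (A₁ : 𝒵 × (Fin qe → 𝒞₁ × 𝒞₂) → ℳ × ℳ × 𝒮t)
      (A₂ : 𝒮t × 𝒞₁ × 𝒞₂ → Bool),
      |(∑ x : 𝒳, ∑ z : 𝒵, ∑ rv : Fin (qe + 1) → ℛ,
          (p (x, z) / (Fintype.card ℛ : ℝ) ^ (qe + 1)) *
            (let v := resps Enc D g x z (fun i => rv i.castSucc)
             let a := A₁ (z, v)
             let ck := Enc (x, rv (Fin.last qe))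
             (1 / 2) * (if A₂ (a.2.2, ck.1, D ck.2 a.1) = false then 1 else 0)
               + (1 / 2) * (if A₂ (a.2.2, ck.1, D ck.2 a.2.1) = true then 1 else 0)))
        - 1 / 2| ≤ σ + σ' :=
  hybrid_encryption_ind_qe_cpa_general ℓ qe Enc D p hp hsum σ σ' hKEM hDEM
end
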